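/- Let P = x·y⁴ + y·z⁴ + z·x⁴ + w⁵ ∈ ℂ[x,y,z,w]. The only common zero in ℂ⁴ of the four partial derivatives ∂P/∂x, ∂P/∂y, ∂P/∂z, ∂P/∂w is (0,0,0,0). Consequently, the quintic surface {P = 0} ⊂ ℙ³(ℂ) is smooth. -/
import Mathlib


open MvPolynomial

private lemma quintic_aux (a b c : ℂ) (h0 : b ^ 4 + c * (4 * a ^ 3) = 0)
    (h1 : a * (4 * b ^ 3) + c ^ 4 = 0) (h2 : b * (4 * c ^ 3) + a ^ 4 = 0) :
    a = 0 ∧ b = 0 ∧ c = 0 := by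
  have key : (65 : ℂ) * (a * b * c) ^ 4 = 0 := by
    linear_combination (a^4*c^4) * h0 + (16*a^3*b*c^4) * h1 + (-4*a^3*c^5) * h2
  have habc : a * b * c = 0 := by
    rcases mul_eq_zero.mp key with h65 | hp
    · exact absurd h65 (by norm_num)
    · exact (pow_eq_zero_iff (by norm_num : (4:ℕ) ≠ 0)).mp hp
  have p4 : ∀ x : ℂ, x ^ 4 = 0 → x = 0 := fun x hx =>
    (pow_eq_zero_iff (by norm_num : (4:ℕ) ≠ 0)).mp hx
  rcases mul_eq_zero.mp habc with hab | hc0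
  · rcases mul_eq_zero.mp hab with ha0 | hb0
    · subst ha0
      have hb0 : b = 0 := p4 b (by linear_combination h0)
      have hc0 : c = 0 := p4 c (by linear_combination h1)
      exact ⟨rfl, hb0, hc0⟩
    · subst hb0
      have hc0 : c = 0 := p4 c (by linear_combination h1)
      have ha0 : a = 0 := p4 a (by linear_combination h2)
      exact ⟨ha0, rfl, hc0⟩
  · subst hc0
    have hb0 : b = 0 := p4 b (by linear_combination h0)
    have ha0 : a = 0 := p4 a (by linear_combination h2)
    exact ⟨ha0, hb0, rfl⟩

/-- The homogeneous quintic `P = x·y⁴ + y·z⁴ + z·x⁴ + w⁵` in variables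
`x = X 0`, `y = X 1`, `z = X 2`, `w = X 3` over `ℂ` (Shioda's Delsarte quintic
with Picard number `ρ = 1`). -/
noncomputable def quinticRho1 : MvPolynomial (Fin 4) ℂ :=
  X 0 * X 1 ^ 4 + X 1 * X 2 ^ 4 + X 2 * X 0 ^ 4 + X 3 ^ 5

/-- The only common zero in `ℂ⁴` of the four partial derivatives of `P` is the
origin; consequently the quintic surface `{P = 0} ⊂ ℙ³(ℂ)` is smooth. -/
theorem quinticRho1_smooth :
    {v : Fin 4 → ℂ | ∀ i : Fin 4, eval v (pderiv i quinticRho1) = 0} = {0} := by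
  ext v
  simp only [Set.mem_setOf_eq, Set.mem_singleton_iff]
  constructor
  · intro h
    have h0 := h 0; have h1 := h 1; have h2 := h 2; have h3 := h 3
    simp [quinticRho1, pderiv_X, Pi.single_apply] at h0 h1 h2 h3
    obtain ⟨ha, hb, hc⟩ := quintic_aux (v 0) (v 1) (v 2) h0 h1 h2
    funext i
    fin_cases i
    · exact ha
    · exact hb
    · exact hc
    · exact h3
  · rintro rfl
    intro i
    fin_cases i <;> simp [quinticRho1, pderiv_X, Pi.single_apply]
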